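/- arXiv:1407.6169 — 6 statements merged into one kernel-verified Lean document; each statement's English description precedes it below -/
import Mathlib

section
/- Let f : 𝔽₂^n → 𝔽₂ be a Boolean function and suppose there exists an affine subspace U ⊆ 𝔽₂^n of dimension k such that f restricted to U agrees with an affine function. Then NL(f) ≤ 2^{n-1} - 2^{k-1}. -/
/-- Nonlinearity of an `(n,1)`-function: `2^n` minus the maximal agreement
with an affine function `x ↦ ⟨a,x⟩ + b`. -/
noncomputable def NL (n : ℕ) (f : (Fin n → ZMod 2) → ZMod 2) : ℕ :=
  2 ^ n - Finset.univ.sup (fun ab : (Fin n → ZMod 2) × ZMod 2 =>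
    Nat.card {x : Fin n → ZMod 2 | (∑ i, ab.1 i * x i) + ab.2 = f x})

/-- `f` agrees with an affine function on the set `U`. -/
def AffineOn (n : ℕ) (f : (Fin n → ZMod 2) → ZMod 2) (U : Set (Fin n → ZMod 2)) : Prop :=
  ∃ a : Fin n → ZMod 2, ∃ b : ZMod 2, ∀ x ∈ U, f x = (∑ i, a i * x i) + b

/-! Let `ℓ` agree with `f` on `U = c + W`. For `φ` in the annihilator `W⁰`, the affine function
`ℓ + φ (· - c)` still agrees with `f` on `U`, while at a point `x ∉ U` it agrees with `f` for exactly
half of the `φ ∈ W⁰`, because `φ ↦ φ (x - c)` is a nonzero linear form on `W⁰`. Averaging over `W⁰`,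
some `φ` agrees with `f` on at least `|U| + (2 ^ n - |U|) / 2 = 2 ^ (n - 1) + 2 ^ (k - 1)` points. -/

open Finset Module

theorem Submodule.card_mul_card_filter_dualAnnihilator_apply_eq {K V : Type*} [Field K]
    [Fintype K] [DecidableEq K] [AddCommGroup V] [Module K V] {W : Submodule K V}
    [Fintype W.dualAnnihilator] {v : V} (hv : v ∉ W) (t : K) :
    Fintype.card K * #{φ : W.dualAnnihilator | (φ : Dual K V) v = t} =
      Fintype.card W.dualAnnihilator := by
  let eval : W.dualAnnihilator →ₗ[K] K := (Dual.eval K V v).comp W.dualAnnihilator.subtype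
  have hsurj : Function.Surjective eval := by
    obtain ⟨ψ, hψW, hψv⟩ : ∃ ψ ∈ W.dualAnnihilator, ψ v ≠ 0 := by
      by_contra! h
      exact hv (Subspace.dualAnnihilator_dualCoannihilator_eq (W := W) ▸
        (Submodule.mem_dualCoannihilator v).2 h)
    intro s
    refine ⟨(s / ψ v) • ⟨ψ, hψW⟩, ?_⟩
    simp [eval, hψv]
  have hfiber (s : K) : #{φ | eval φ = s} = #{φ | eval φ = t} :=
    AddMonoidHom.card_fiber_eq_of_mem_range eval.toAddMonoidHom (hsurj s) (hsurj t)
  calc Fintype.card K * #{φ | eval φ = t} = ∑ s : K, #{φ | eval φ = s} := by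
        rw [sum_congr rfl fun s _ => hfiber s, sum_const, card_univ, smul_eq_mul]
    _ = Fintype.card W.dualAnnihilator := by
        rw [← card_univ, card_eq_sum_card_fiberwise (f := eval) (t := univ)
          fun _ _ => mem_coe.2 (mem_univ _)]

section
variable {V : Type*} [AddCommGroup V] [Module (ZMod 2) V] [Fintype V]
  (W : Submodule (ZMod 2) V) [DecidablePred (· ∈ W)] (c : V)

theorem Submodule.card_filter_sub_mem : #{x | x - c ∈ W} = Fintype.card W := by
  rw [← Fintype.card_subtype]
  exact Fintype.card_congr ((Equiv.subRight c).subtypeEquiv fun _ => Iff.rfl)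

theorem Submodule.exists_mem_dualAnnihilator_card_add_card_le {f h : V → ZMod 2}
    (hfh : ∀ w ∈ W, f (c + w) = h (c + w)) :
    ∃ φ ∈ W.dualAnnihilator,
      Fintype.card V + Fintype.card W ≤ 2 * #{x | h x + φ (x - c) = f x} := by
  have : Finite (Dual (ZMod 2) V) := Module.finite_of_finite (ZMod 2)
  let := Fintype.ofFinite W.dualAnnihilator
  set M := Fintype.card W.dualAnnihilator
  have hfiber (x : V) :
      2 * #{φ : W.dualAnnihilator | h x + (φ : Dual (ZMod 2) V) (x - c) = f x} =
        M + if x - c ∈ W then M else 0 := by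
    simp only [← eq_sub_iff_add_eq']
    split_ifs with hx
    · have hfx : f x - h x = 0 := by simpa [sub_eq_zero] using hfh (x - c) hx
      rw [hfx, filter_true_of_mem fun φ _ => (Submodule.mem_dualAnnihilator _).1 φ.2 _ hx,
        card_univ, two_mul]
    · simpa using W.card_mul_card_filter_dualAnnihilator_apply_eq hx (f x - h x)
  have hsum : ∑ φ : W.dualAnnihilator, 2 * #{x | h x + (φ : Dual (ZMod 2) V) (x - c) = f x} =
      ∑ _φ : W.dualAnnihilator, (Fintype.card V + Fintype.card W) := by
    calc _ = ∑ x, 2 * #{φ : W.dualAnnihilator | h x + (φ : Dual (ZMod 2) V) (x - c) = f x} := by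
          simp only [card_filter, mul_sum]
          exact sum_comm
      _ = ∑ x : V, (M + if x - c ∈ W then M else 0) := sum_congr rfl fun x _ => hfiber x
      _ = _ := by
          simp only [sum_add_distrib, ← sum_filter, sum_const, W.card_filter_sub_mem, card_univ,
            smul_eq_mul]
          ring
  obtain ⟨φ, -, hφ⟩ := exists_le_of_sum_le univ_nonempty hsum.ge
  exact ⟨φ, φ.2, hφ⟩

end

theorem Module.Dual.apply_eq_sum_apply_single_mul {R ι : Type*} [CommSemiring R] [Fintype ι]
    [DecidableEq ι] (φ : Dual R (ι → R)) (x : ι → R) :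
    φ x = ∑ i, φ (Pi.single i 1) * x i := by
  rw [LinearMap.pi_apply_eq_sum_univ]
  refine sum_congr rfl fun i _ => ?_
  rw [smul_eq_mul, mul_comm]
  congr 2
  ext j
  simp [Pi.single_apply, eq_comm]

theorem NL_le_of_le_two_mul_card {n k : ℕ} {f : (Fin n → ZMod 2) → ZMod 2}
    (a : Fin n → ZMod 2) (b : ZMod 2)
    (h : 2 ^ n + 2 ^ k ≤ 2 * Nat.card {x : Fin n → ZMod 2 | (∑ i, a i * x i) + b = f x}) :
    (NL n f : ℝ) ≤ 2 ^ ((n : ℝ) - 1) - 2 ^ ((k : ℝ) - 1) := by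
  set A := Nat.card {x : Fin n → ZMod 2 | (∑ i, a i * x i) + b = f x}
  have hA : A ≤ 2 ^ n := by
    simpa [Nat.card_eq_fintype_card] using Finite.card_subtype_le (α := Fin n → ZMod 2) _
  have hNL : NL n f ≤ 2 ^ n - A :=
    Nat.sub_le_sub_left (le_sup (f := fun ab : (Fin n → ZMod 2) × ZMod 2 =>
      Nat.card {x : Fin n → ZMod 2 | (∑ i, ab.1 i * x i) + ab.2 = f x}) (mem_univ (a, b))) _
  have hreal : (2 : ℝ) ^ n + 2 ^ k ≤ 2 * A := by exact_mod_cast h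
  rw [Real.rpow_sub two_pos, Real.rpow_sub two_pos, Real.rpow_one, Real.rpow_natCast,
    Real.rpow_natCast]
  calc (NL n f : ℝ) ≤ ((2 ^ n - A : ℕ) : ℝ) := by exact_mod_cast hNL
    _ = 2 ^ n - A := by push_cast [Nat.cast_sub hA]; ring
    _ ≤ 2 ^ n / 2 - 2 ^ k / 2 := by linarith

/-- If f is affine on an affine subspace of dimension k, then NL(f) ≤ 2^(n-1) - 2^(k-1). -/
theorem nl_le_of_affine_on_subspace (n k : ℕ) (f : (Fin n → ZMod 2) → ZMod 2)
    (W : Submodule (ZMod 2) (Fin n → ZMod 2)) (c : Fin n → ZMod 2)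
    (hW : Module.finrank (ZMod 2) W = k)
    (hf : AffineOn n f {x | ∃ w ∈ W, x = c + w}) :
    (NL n f : ℝ) ≤ 2 ^ ((n : ℝ) - 1) - 2 ^ ((k : ℝ) - 1) := by
  classical
  obtain ⟨a, b, hab⟩ := hf
  obtain ⟨φ, -, hφ⟩ := W.exists_mem_dualAnnihilator_card_add_card_le c
    (h := fun x => ∑ i, a i * x i + b) fun w hw => hab _ ⟨w, hw, rfl⟩
  have hcardW : Fintype.card W = 2 ^ k := by
    rw [card_eq_pow_finrank (K := ZMod 2) (V := W), ZMod.card, hW]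
  have hline (x : Fin n → ZMod 2) :
      ∑ i, (a i + φ (Pi.single i 1)) * x i + (b - φ c) = ∑ i, a i * x i + b + φ (x - c) := by
    simp only [add_mul, sum_add_distrib, ← φ.apply_eq_sum_apply_single_mul, map_sub]
    ring
  refine NL_le_of_le_two_mul_card (fun i => a i + φ (Pi.single i 1)) (b - φ c) ?_
  simp only [Fintype.card_fun, ZMod.card, Fintype.card_fin, hcardW] at hφ
  rw [Nat.card_eq_fintype_card, Fintype.card_subtype]
  simpa only [Set.mem_ofPred_eq, hline] using hφ
end

section
/- If a Boolean function f : 𝔽₂^n → 𝔽₂ has multiplicative complexity M (with respect to XOR-AND circuits), then NL(f) ≤ 2^{n-1} - 2^{n-M-1}. -/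
/-- An instruction of an XOR-AND straight-line circuit: an input variable,
the constant 1, an XOR of two previous wires, or an AND of two previous wires.
(Unbounded-fanin XOR is simulated, for free, by binary XORs.) -/
inductive Instr where
  | var : ℕ → Instr
  | one : Instr
  | xor : ℕ → ℕ → Instr
  | and : ℕ → ℕ → Instr

def Instr.isAnd : Instr → Bool
  | .and _ _ => true
  | _ => false

/-- Value of one instruction, given input `x` and previously computed wire values. -/
def stepEval (n : ℕ) (x : Fin n → ZMod 2) (vals : List (ZMod 2)) : Instr → ZMod 2
  | .var i => if h : i < n then x ⟨i, h⟩ else 0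
  | .one => 1
  | .xor a b => vals.getD a 0 + vals.getD b 0
  | .and a b => vals.getD a 0 * vals.getD b 0

/-- The list of all wire values of the circuit `P` on input `x`. -/
def evalProg (n : ℕ) (x : Fin n → ZMod 2) (P : List Instr) : List (ZMod 2) :=
  P.foldl (fun vals ins => vals ++ [stepEval n x vals ins]) []

/-- Number of AND gates in the circuit. -/
def andCount (P : List Instr) : ℕ := (P.filter Instr.isAnd).length

/-- The circuit `P` with output wires `out` computes the `(n,m)`-function `f`. -/
def Computes (n m : ℕ) (P : List Instr) (out : Fin m → ℕ)
    (f : (Fin n → ZMod 2) → Fin m → ZMod 2) : Prop :=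
  ∀ x i, (evalProg n x P).getD (out i) 0 = f x i

/-- The circuit `P` with output wire `out` computes the `(n,1)`-function `f`. -/
def Computes1 (n : ℕ) (P : List Instr) (out : ℕ)
    (f : (Fin n → ZMod 2) → ZMod 2) : Prop :=
  ∀ x, (evalProg n x P).getD out 0 = f x


/-
Along the circuit we maintain a set `s` of inputs on which every wire is an affine function, cut
out from `𝔽₂ⁿ` by affine equations. An AND gate `a * b` with `a`, `b` affine on `s` becomes affine
on whichever of `s ∩ {a = 0}`, `s ∩ {a = 1}` is larger, so each AND gate costs at most half of `s`
and in the end `|s| ≥ 2^(n-M)`, with `f` equal on `s` to an affine `ℓ`.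

Undoing the cuts one at a time, `ℓ` extends to an affine function agreeing with `f` on at least
`2^(n-1) + |s|/2` points: across a cut `t = s ∩ {c = 0}`, the functions `ℓ` and `ℓ + c` coincide on
`t` and are complementary on `s \ t`, so one of them agrees with `f` on half of `s \ t`.
-/

open Finset

section Agreement

variable {α : Type*}

def agreeCount (s : Finset α) (g ℓ : α → ZMod 2) : ℕ := #{x ∈ s | g x = ℓ x}

theorem agreeCount_add_agreeCount_add (s : Finset α) (g ℓ h : α → ZMod 2) :
    agreeCount s g ℓ + agreeCount s g (ℓ + h) =
      2 * agreeCount {x ∈ s | h x = 0} g ℓ + #{x ∈ s | h x ≠ 0} := by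
  have pointwise : ∀ a b c : ZMod 2,
      ((if a = b then 1 else 0) + if a = b + c then 1 else 0) =
        if c = 0 then 2 * (if a = b then 1 else 0) else (1 : ℕ) := by
    decide
  calc agreeCount s g ℓ + agreeCount s g (ℓ + h)
      = ∑ x ∈ s, ((if g x = ℓ x then 1 else 0) + if g x = ℓ x + h x then 1 else 0) := by
        simp only [agreeCount, card_filter, sum_add_distrib, Pi.add_apply]
    _ = ∑ x ∈ s, if h x = 0 then 2 * (if g x = ℓ x then 1 else 0) else 1 :=
        sum_congr rfl fun x _ => pointwise (g x) (ℓ x) (h x)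
    _ = _ := by
        rw [sum_ite, ← mul_sum, ← card_eq_sum_ones]
        simp only [agreeCount, card_filter, sum_filter]

end Agreement

section AffineCut

variable {V : Type*} [AddCommGroup V] [Module (ZMod 2) V]

def IsAffineOn (s : Finset V) (g : V → ZMod 2) : Prop :=
  ∃ ℓ : V →ᵃ[ZMod 2] ZMod 2, ∀ x ∈ s, g x = ℓ x

theorem IsAffineOn.mono {s t : Finset V} {g : V → ZMod 2} (hg : IsAffineOn s g) (hts : t ⊆ s) :
    IsAffineOn t g :=
  let ⟨ℓ, hℓ⟩ := hg; ⟨ℓ, fun x hx => hℓ x (hts hx)⟩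

theorem isAffineOn_const (s : Finset V) (c : ZMod 2) : IsAffineOn s fun _ => c :=
  ⟨AffineMap.const (ZMod 2) V c, fun _ _ => rfl⟩

theorem IsAffineOn.add {s : Finset V} {g h : V → ZMod 2} (hg : IsAffineOn s g)
    (hh : IsAffineOn s h) : IsAffineOn s fun x => g x + h x :=
  let ⟨ℓ, hℓ⟩ := hg
  let ⟨m, hm⟩ := hh
  ⟨ℓ + m, fun x hx => by simp only [hℓ x hx, hm x hx, AffineMap.coe_add, Pi.add_apply]⟩

theorem IsAffineOn.exists_isAffineOn_mul {s : Finset V} {g h : V → ZMod 2}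
    (hg : IsAffineOn s g) (hh : IsAffineOn s h) :
    ∃ c : V →ᵃ[ZMod 2] ZMod 2, #s ≤ 2 * #{x ∈ s | c x = 0} ∧
      IsAffineOn {x ∈ s | c x = 0} fun x => g x * h x := by
  obtain ⟨ℓ, hℓ⟩ := hg
  obtain ⟨m, hm⟩ := hh
  let ℓ₁ := ℓ + AffineMap.const (ZMod 2) V 1
  have hℓ₁ : ∀ x, ℓ₁ x = 0 ↔ ¬ℓ x = 0 := fun x => by
    simp only [ℓ₁, AffineMap.coe_add, Pi.add_apply, AffineMap.const_apply]
    generalize ℓ x = a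
    revert a; decide
  have hsplit : #{x ∈ s | ℓ x = 0} + #{x ∈ s | ℓ₁ x = 0} = #s := by
    simp only [hℓ₁]
    exact card_filter_add_card_filter_not _
  rcases le_total #s (2 * #{x ∈ s | ℓ x = 0}) with hle | hle
  · refine ⟨ℓ, hle, AffineMap.const (ZMod 2) V 0, fun x hx => ?_⟩
    obtain ⟨hxs, hx0⟩ := mem_filter.mp hx
    simp only [hℓ x hxs, hx0, zero_mul, AffineMap.const_apply]
  · refine ⟨ℓ₁, by omega, m, fun x hx => ?_⟩
    obtain ⟨hxs, hx1⟩ := mem_filter.mp hx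
    have hg1 : ℓ x = 1 := (by decide : ∀ a : ZMod 2, ¬a = 0 → a = 1) _ ((hℓ₁ x).mp hx1)
    simp only [hℓ x hxs, hg1, one_mul, hm x hxs]

variable [Fintype V]

inductive IsAffineCut : Finset V → Prop
  | univ : IsAffineCut univ
  | cut {s : Finset V} (c : V →ᵃ[ZMod 2] ZMod 2) : IsAffineCut s → IsAffineCut {x ∈ s | c x = 0}

theorem IsAffineCut.exists_agreeCount_univ_ge {s : Finset V} (hs : IsAffineCut s)
    (g : V → ZMod 2) (ℓ : V →ᵃ[ZMod 2] ZMod 2) :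
    ∃ ℓ' : V →ᵃ[ZMod 2] ZMod 2,
      Fintype.card V + 2 * agreeCount s g ℓ ≤ #s + 2 * agreeCount Finset.univ g ℓ' := by
  induction hs generalizing ℓ with
  | univ => exact ⟨ℓ, by rw [card_univ]⟩
  | @cut s c _ ih =>
    have hflip : agreeCount s g ℓ + agreeCount s g (ℓ + c) =
        2 * agreeCount {x ∈ s | c x = 0} g ℓ + #{x ∈ s | c x ≠ 0} :=
      agreeCount_add_agreeCount_add s g ℓ c
    have hsplit : #{x ∈ s | c x = 0} + #{x ∈ s | c x ≠ 0} = #s :=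
      card_filter_add_card_filter_not _
    rcases le_total (agreeCount s g ℓ) (agreeCount s g (ℓ + c)) with hle | hle
    · obtain ⟨ℓ', hℓ'⟩ := ih (ℓ + c)
      rw [AffineMap.coe_add] at hℓ'
      exact ⟨ℓ', by omega⟩
    · obtain ⟨ℓ', hℓ'⟩ := ih ℓ
      exact ⟨ℓ', by omega⟩

end AffineCut

section Circuit

variable {n : ℕ}

theorem evalProg_append_singleton (x : Fin n → ZMod 2) (P : List Instr) (ins : Instr) :
    evalProg n x (P ++ [ins]) = evalProg n x P ++ [stepEval n x (evalProg n x P) ins] := by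
  simp only [evalProg, List.foldl_append, List.foldl_cons, List.foldl_nil]

theorem length_evalProg (x : Fin n → ZMod 2) (P : List Instr) :
    (evalProg n x P).length = P.length := by
  induction P using List.reverseRecOn with
  | nil => rfl
  | append_singleton P ins ih => simp [evalProg_append_singleton, ih]

theorem andCount_append_singleton (P : List Instr) (ins : Instr) :
    andCount (P ++ [ins]) = andCount P + if ins.isAnd then 1 else 0 := by
  cases h : ins.isAnd <;> simp [andCount, List.filter_append, h]

variable (n) in
def WiresAffineOn (P : List Instr) (s : Finset (Fin n → ZMod 2)) : Prop :=
  ∀ j, IsAffineOn s fun x => (evalProg n x P).getD j 0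

theorem wiresAffineOn_nil (s : Finset (Fin n → ZMod 2)) : WiresAffineOn n [] s :=
  fun _ => isAffineOn_const s 0

theorem WiresAffineOn.mono {P : List Instr} {s t : Finset (Fin n → ZMod 2)}
    (hw : WiresAffineOn n P s) (hts : t ⊆ s) : WiresAffineOn n P t :=
  fun j => (hw j).mono hts

theorem WiresAffineOn.append_singleton {P : List Instr} {s : Finset (Fin n → ZMod 2)}
    {ins : Instr} (hw : WiresAffineOn n P s)
    (hins : IsAffineOn s fun x => stepEval n x (evalProg n x P) ins) :
    WiresAffineOn n (P ++ [ins]) s := by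
  intro j
  rcases lt_or_ge j P.length with hj | hj
  · convert hw j using 2 with x
    rw [evalProg_append_singleton, List.getD_append _ _ _ _ (by rwa [length_evalProg])]
  · have hget : ∀ x, (evalProg n x (P ++ [ins])).getD j 0 =
        [stepEval n x (evalProg n x P) ins].getD (j - P.length) 0 := fun x => by
      rw [evalProg_append_singleton, List.getD_append_right _ _ _ _ (by rwa [length_evalProg]),
        length_evalProg]
    simp only [hget]
    rcases j - P.length with _ | k
    · exact hins
    · exact isAffineOn_const s 0

theorem WiresAffineOn.isAffineOn_stepEval {P : List Instr} {s : Finset (Fin n → ZMod 2)}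
    (hw : WiresAffineOn n P s) {ins : Instr} (hins : ins.isAnd = false) :
    IsAffineOn s fun x => stepEval n x (evalProg n x P) ins := by
  cases ins with
  | var i =>
    by_cases hi : i < n
    · exact ⟨(LinearMap.proj (R := ZMod 2) (φ := fun _ => ZMod 2) ⟨i, hi⟩).toAffineMap,
        fun x _ => by simp [stepEval, hi]⟩
    · exact ⟨AffineMap.const (ZMod 2) _ 0, fun x _ => by simp [stepEval, hi]⟩
  | one => exact isAffineOn_const s 1
  | xor a b => exact (hw a).add (hw b)
  | and a b => cases hins

theorem exists_isAffineCut_wiresAffineOn (P : List Instr) :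
    ∃ s : Finset (Fin n → ZMod 2),
      IsAffineCut s ∧ 2 ^ n ≤ #s * 2 ^ andCount P ∧ WiresAffineOn n P s := by
  induction P using List.reverseRecOn with
  | nil => exact ⟨univ, .univ, by simp [andCount], wiresAffineOn_nil univ⟩
  | append_singleton P ins ih =>
    obtain ⟨s, hs, hcard, hw⟩ := ih
    rw [andCount_append_singleton]
    cases ins with
    | and a b =>
      obtain ⟨c, hhalf, hmul⟩ := (hw a).exists_isAffineOn_mul (hw b)
      refine ⟨_, hs.cut c, ?_, (hw.mono (filter_subset _ s)).append_singleton hmul⟩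
      calc 2 ^ n ≤ #s * 2 ^ andCount P := hcard
        _ ≤ 2 * #{x ∈ s | c x = 0} * 2 ^ andCount P := by gcongr
        _ = _ := by simp only [Instr.isAnd, if_true]; ring
    | _ =>
      exact ⟨s, hs, by simpa [Instr.isAnd] using hcard,
        hw.append_singleton (hw.isAffineOn_stepEval rfl)⟩

end Circuit

theorem AffineMap.apply_eq_sum_mul_add {ι R : Type*} [Fintype ι] [DecidableEq ι] [CommRing R]
    (ℓ : (ι → R) →ᵃ[R] R) (x : ι → R) :
    ℓ x = ∑ i, ℓ.linear (fun j => if i = j then 1 else 0) * x i + ℓ 0 := by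
  rw [congrFun ℓ.decomp x, Pi.add_apply, LinearMap.pi_apply_eq_sum_univ]
  simp only [smul_eq_mul, mul_comm]

theorem NL_add_agreeCount_le {n : ℕ} (f : (Fin n → ZMod 2) → ZMod 2)
    (ℓ : (Fin n → ZMod 2) →ᵃ[ZMod 2] ZMod 2) : NL n f + agreeCount univ f ℓ ≤ 2 ^ n := by
  have hcard : ∀ ab : (Fin n → ZMod 2) × ZMod 2,
      Nat.card {x : Fin n → ZMod 2 | (∑ i, ab.1 i * x i) + ab.2 = f x} =
        #{x | (∑ i, ab.1 i * x i) + ab.2 = f x} := fun ab => by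
    simp
  unfold NL
  refine (Nat.add_le_add_left ?_ _).trans (tsub_add_cancel_of_le ?_).le
  · refine le_sup_of_le (mem_univ (fun i => ℓ.linear (fun j => if i = j then 1 else 0), ℓ 0))
      (le_of_eq ?_)
    rw [hcard, agreeCount]
    congr 1
    ext x
    rw [mem_filter, mem_filter, ℓ.apply_eq_sum_mul_add x, eq_comm]
  · exact Finset.sup_le fun ab _ => (hcard ab).trans_le <| (card_filter_le _ _).trans_eq <| by simp

/-- A Boolean function with multiplicative complexity M has NL(f) ≤ 2^(n-1) - 2^(n-M-1). -/
theorem nl_le_of_mult_complexity (n M : ℕ) (f : (Fin n → ZMod 2) → ZMod 2)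
    (P : List Instr) (out : ℕ) (hP : Computes1 n P out f) (hM : andCount P = M) :
    (NL n f : ℝ) ≤ 2 ^ ((n : ℝ) - 1) - 2 ^ ((n : ℝ) - M - 1) := by
  obtain ⟨s, hs, hcard, hw⟩ := exists_isAffineCut_wiresAffineOn (n := n) P
  obtain ⟨ℓ, hℓ⟩ := hw out
  have hagree : agreeCount s f ℓ = #s := by
    rw [agreeCount, filter_true_of_mem fun x hx => by rw [← hP x]; exact hℓ x hx]
  obtain ⟨ℓ', hℓ'⟩ := hs.exists_agreeCount_univ_ge f ℓ
  have hNL := NL_add_agreeCount_le f ℓ'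
  rw [hagree, Fintype.card_fun, ZMod.card, Fintype.card_fin] at hℓ'
  rw [hM] at hcard
  have hNL_real : (2 * NL n f + #s : ℝ) ≤ 2 ^ n := by
    exact_mod_cast (by omega : 2 * NL n f + #s ≤ 2 ^ n)
  have hcard_real : (2 ^ n : ℝ) ≤ #s * 2 ^ M := by exact_mod_cast hcard
  rw [Real.rpow_sub two_pos, Real.rpow_sub two_pos, Real.rpow_sub two_pos, Real.rpow_one,
    Real.rpow_natCast, Real.rpow_natCast]
  have : (2 : ℝ) ^ n / 2 ^ M ≤ #s := by rw [div_le_iff₀ (by positivity)]; exact hcard_real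
  linarith
end

section
/- The nonlinearity of any Boolean function f : 𝔽₂^n → 𝔽₂ is at most 2^{n-1} − 2^{n/2−1}. -/
open Finset

def signChar : AddChar (ZMod 2) ℤ where
  toFun t := if t = 0 then 1 else -1
  map_zero_eq_one' := rfl
  map_add_eq_mul' := by decide

lemma signChar_one : signChar 1 = -1 := rfl

lemma signChar_add_eq_ite (s t : ZMod 2) : signChar (s + t) = if s = t then 1 else -1 := by
  revert s t; decide

lemma signChar_sq (t : ZMod 2) : signChar t ^ 2 = 1 := by
  revert t; decide

lemma exists_signChar_mul_eq_abs (w : ℤ) : ∃ b, signChar b * w = |w| := by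
  rcases le_or_gt 0 w with hw | hw
  · exact ⟨0, by rw [AddChar.map_zero_eq_one, one_mul, abs_of_nonneg hw]⟩
  · exact ⟨1, by rw [signChar_one, abs_of_neg hw]; ring⟩

section Walsh

variable {ι : Type*} [Fintype ι] [DecidableEq ι]

lemma sum_signChar_dotProduct (z : ι → ZMod 2) :
    ∑ a, signChar (a ⬝ᵥ z) = if z = 0 then 2 ^ Fintype.card ι else 0 := by
  let ψ := signChar.compAddMonoidHom (AddMonoidHom.mk' (· ⬝ᵥ z) fun a b => add_dotProduct a b z)
  have hψ : ψ = 0 ↔ z = 0 := by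
    refine ⟨fun h => ?_, fun h => by ext a; simp [ψ, h]⟩
    by_contra hz
    obtain ⟨i, hi⟩ := Function.ne_iff.1 hz
    have hzi : z i = 1 := Fin.eq_one_of_ne_zero (z i) hi
    have := DFunLike.congr_fun h (Pi.single i 1)
    simp [ψ, single_dotProduct, hzi, signChar_one] at this
  have := AddChar.sum_eq_ite ψ
  simp only [hψ, Fintype.card_pi, ZMod.card, prod_const, card_univ] at this
  simpa [ψ] using this

def walshTransform (g : (ι → ZMod 2) → ℤ) (a : ι → ZMod 2) : ℤ :=
  ∑ x, g x * signChar (a ⬝ᵥ x)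

theorem sum_walshTransform_sq (g : (ι → ZMod 2) → ℤ) :
    ∑ a, walshTransform g a ^ 2 = 2 ^ Fintype.card ι * ∑ x, g x ^ 2 := by
  have hsq (a : ι → ZMod 2) :
      walshTransform g a ^ 2 = ∑ x, ∑ y, g x * g y * signChar (a ⬝ᵥ (x + y)) := by
    rw [walshTransform, sq, sum_mul_sum]
    refine sum_congr rfl fun x _ => sum_congr rfl fun y _ => ?_
    rw [dotProduct_add, AddChar.map_add_eq_mul]
    ring
  have hdiag (x y : ι → ZMod 2) : x + y = 0 ↔ y = x := by
    simp only [funext_iff, Pi.add_apply, Pi.zero_apply, CharTwo.add_eq_zero, eq_comm]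
  calc ∑ a, walshTransform g a ^ 2
      = ∑ x, ∑ y, g x * g y * ∑ a, signChar (a ⬝ᵥ (x + y)) := by
        simp_rw [hsq, mul_sum]
        rw [sum_comm]
        exact sum_congr rfl fun x _ => sum_comm
    _ = ∑ x, ∑ y, if y = x then 2 ^ Fintype.card ι * g x ^ 2 else 0 := by
        refine sum_congr rfl fun x _ => sum_congr rfl fun y _ => ?_
        simp only [sum_signChar_dotProduct, hdiag]
        split_ifs with h
        · rw [h]; ring
        · rw [mul_zero]
    _ = 2 ^ Fintype.card ι * ∑ x, g x ^ 2 := by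
        simp only [sum_ite_eq', mem_univ, if_true, mul_sum]

theorem two_mul_card_agree (f : (ι → ZMod 2) → ZMod 2) (a : ι → ZMod 2) (b : ZMod 2) :
    2 * (#{x | a ⬝ᵥ x + b = f x} : ℤ)
      = 2 ^ Fintype.card ι + signChar b * walshTransform (signChar ∘ f) a := by
  have hterm (x : ι → ZMod 2) : signChar b * (signChar (f x) * signChar (a ⬝ᵥ x))
      = 2 * (if a ⬝ᵥ x + b = f x then 1 else 0) - 1 := by
    rw [← AddChar.map_add_eq_mul, ← AddChar.map_add_eq_mul,
      show b + (f x + a ⬝ᵥ x) = a ⬝ᵥ x + b + f x by ring, signChar_add_eq_ite]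
    split_ifs <;> norm_num
  rw [walshTransform, mul_sum]
  simp only [Function.comp_apply, hterm, sum_sub_distrib, ← mul_sum, sum_boole, sum_const,
    card_univ, Fintype.card_pi, ZMod.card, prod_const]
  simp

theorem exists_agreement_ge (f : (ι → ZMod 2) → ZMod 2) :
    ∃ a b, (2 : ℝ) ^ Fintype.card ι + √(2 ^ Fintype.card ι) ≤ 2 * #{x | a ⬝ᵥ x + b = f x} := by
  obtain ⟨a, -, ha⟩ : ∃ a ∈ (univ : Finset (ι → ZMod 2)),
      (2 : ℤ) ^ Fintype.card ι ≤ walshTransform (signChar ∘ f) a ^ 2 := by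
    refine exists_le_of_sum_le univ_nonempty ?_
    simp [sum_walshTransform_sq, signChar_sq]
  obtain ⟨b, hb⟩ := exists_signChar_mul_eq_abs (walshTransform (signChar ∘ f) a)
  refine ⟨a, b, ?_⟩
  have hsqrt : √(2 ^ Fintype.card ι) ≤ |(walshTransform (signChar ∘ f) a : ℝ)| := by
    rw [← Real.sqrt_sq_eq_abs]
    exact Real.sqrt_le_sqrt (by exact_mod_cast ha)
  have hcount := congrArg (Int.cast : ℤ → ℝ) (two_mul_card_agree f a b)
  push_cast [hb] at hcount
  linarith

end Walsh

lemma NL_le_sub_card_agree (n : ℕ) (f : (Fin n → ZMod 2) → ZMod 2) (a : Fin n → ZMod 2)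
    (b : ZMod 2) : (NL n f : ℝ) ≤ 2 ^ n - #{x | a ⬝ᵥ x + b = f x} := by
  have hle : NL n f ≤ 2 ^ n - #{x | a ⬝ᵥ x + b = f x} := by
    refine tsub_le_tsub_left ?_ _
    convert le_sup (f := fun ab : (Fin n → ZMod 2) × ZMod 2 =>
      Nat.card {x : Fin n → ZMod 2 | (∑ i, ab.1 i * x i) + ab.2 = f x}) (mem_univ (a, b))
    rw [Nat.card_eq_fintype_card, Fintype.card_subtype]
    rfl
  have hcard : #{x | a ⬝ᵥ x + b = f x} ≤ 2 ^ n := by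
    simpa using card_filter_le univ (fun x => a ⬝ᵥ x + b = f x)
  calc (NL n f : ℝ) ≤ ((2 ^ n - #{x | a ⬝ᵥ x + b = f x} : ℕ) : ℝ) := Nat.cast_le.2 hle
    _ = 2 ^ n - #{x | a ⬝ᵥ x + b = f x} := by rw [Nat.cast_sub hcard]; push_cast; rfl

lemma two_rpow_div_two_sub_one (n : ℕ) : (2 : ℝ) ^ ((n : ℝ) / 2 - 1) = √(2 ^ n) / 2 := by
  rw [Real.rpow_sub two_pos, Real.rpow_one, Real.sqrt_eq_rpow, ← Real.rpow_natCast,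
    ← Real.rpow_mul zero_le_two, mul_one_div]

/-- The nonlinearity of any Boolean function is at most 2^(n-1) - 2^(n/2-1). -/
theorem nl_le_bent_bound (n : ℕ) (f : (Fin n → ZMod 2) → ZMod 2) :
    (NL n f : ℝ) ≤ 2 ^ ((n : ℝ) - 1) - 2 ^ ((n : ℝ) / 2 - 1) := by
  obtain ⟨a, b, hagree⟩ := exists_agreement_ge f
  rw [Fintype.card_fin] at hagree
  have hNL := NL_le_sub_card_agree n f a b
  rw [Real.rpow_sub two_pos, Real.rpow_one, Real.rpow_natCast, two_rpow_div_two_sub_one]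
  linarith
end

section
/- The inner product function IP_{2k}(x₁,…,x_k,y₁,…,y_k) = ∑_{i=1}^k xᵢyᵢ over 𝔽₂ has nonlinearity exactly 2^{2k-1} − 2^{k-1}, i.e., it is bent. -/
open Finset Function

section FiberCount

variable {G H : Type*} [AddGroup G] [AddGroup H] [Fintype G] [DecidableEq H]

theorem AddMonoidHom.card_fiber_eq_card_fiber_zero (f : G →+ H) {c : H} (hc : c ∈ f.range) :
    #{x | f x = c} = #{x | f x = 0} := by
  obtain ⟨x₀, rfl⟩ := hc
  symm
  refine card_equiv (Equiv.addRight x₀) fun x => ?_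
  simp

theorem AddMonoidHom.card_mul_card_fiber_of_surjective [Fintype H] (f : G →+ H)
    (hf : Surjective f) (c : H) : Fintype.card H * #{x | f x = c} = Fintype.card G := by
  have hfib (d : H) : #{x | f x = d} = #{x | f x = c} := by
    rw [f.card_fiber_eq_card_fiber_zero (hf d), f.card_fiber_eq_card_fiber_zero (hf c)]
  calc Fintype.card H * #{x | f x = c}
      = ∑ d : H, #{x | f x = d} := by simp [hfib]
    _ = Fintype.card G := (card_eq_sum_card_fiberwise fun _ _ => mem_univ _).symm

end FiberCount

section DotProduct

variable {F ι : Type*} [Field F] [Fintype F] [DecidableEq F] [Fintype ι] [DecidableEq ι]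

theorem card_dotProduct_eq_of_ne_zero {v : ι → F} (hv : v ≠ 0) (c : F) :
    #{u : ι → F | u ⬝ᵥ v = c} = Fintype.card F ^ (Fintype.card ι - 1) := by
  obtain ⟨j, hj⟩ : ∃ j, v j ≠ 0 := Function.ne_iff.mp hv
  let f : (ι → F) →+ F := AddMonoidHom.mk' (· ⬝ᵥ v) fun u w => add_dotProduct u w v
  have hf : Surjective f := fun d => ⟨Pi.single j (d / v j), by simp [f, hj]⟩
  have hcount := f.card_mul_card_fiber_of_surjective hf c
  have hι : Fintype.card ι = Fintype.card ι - 1 + 1 :=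
    (Nat.sub_add_cancel (Fintype.card_pos_iff.mpr ⟨j⟩)).symm
  rw [Fintype.card_fun, hι, pow_succ'] at hcount
  exact Nat.eq_of_mul_eq_mul_left Fintype.card_pos hcount

theorem card_pairs_dotProduct_eq (c : F) :
    #{p : (ι → F) × (ι → F) | p.1 ⬝ᵥ p.2 = c} =
      (if c = 0 then Fintype.card F ^ Fintype.card ι else 0) +
        (Fintype.card F ^ Fintype.card ι - 1) * Fintype.card F ^ (Fintype.card ι - 1) := by
  have hsum : #{p : (ι → F) × (ι → F) | p.1 ⬝ᵥ p.2 = c} =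
      ∑ v : ι → F, #{u : ι → F | u ⬝ᵥ v = c} := by
    simp only [card_filter, ← univ_product_univ, sum_product_right]
  rw [hsum, ← add_sum_erase _ _ (mem_univ 0),
    sum_congr rfl fun v hv => card_dotProduct_eq_of_ne_zero (ne_of_mem_erase hv) c]
  congr 1
  · split_ifs with hc <;> simp [hc, eq_comm]
  · simp [card_erase_of_mem]

theorem card_pairs_dotProduct_le (c : F) :
    #{p : (ι → F) × (ι → F) | p.1 ⬝ᵥ p.2 = c} ≤ #{p : (ι → F) × (ι → F) | p.1 ⬝ᵥ p.2 = 0} := by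
  rw [card_pairs_dotProduct_eq, card_pairs_dotProduct_eq]
  by_cases hc : c = 0 <;> simp [hc]

end DotProduct

theorem Fin.append_dotProduct_append {R : Type*} [CommRing R] {m n : ℕ}
    (a₁ x₁ : Fin m → R) (a₂ x₂ : Fin n → R) :
    Fin.append a₁ a₂ ⬝ᵥ Fin.append x₁ x₂ = a₁ ⬝ᵥ x₁ + a₂ ⬝ᵥ x₂ := by
  simp [dotProduct, Fin.sum_univ_add]

theorem card_affine_agree_innerProduct {R : Type*} [CommRing R] [Fintype R] [DecidableEq R]
    {k : ℕ} (a₁ a₂ : Fin k → R) (b : R) :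
    Nat.card {x : Fin (k + k) → R |
        Fin.append a₁ a₂ ⬝ᵥ x + b = ∑ i : Fin k, x (Fin.castAdd k i) * x (Fin.natAdd k i)} =
      #{p : (Fin k → R) × (Fin k → R) | p.1 ⬝ᵥ p.2 = b + a₁ ⬝ᵥ a₂} := by
  let e : (Fin k → R) × (Fin k → R) ≃ (Fin (k + k) → R) :=
    ((Equiv.addRight a₂).prodCongr (Equiv.addRight a₁)).trans (Fin.appendEquiv k k)
  have key : ∀ p, (Fin.append a₁ a₂ ⬝ᵥ e p + b =
      ∑ i : Fin k, e p (Fin.castAdd k i) * e p (Fin.natAdd k i)) ↔ p.1 ⬝ᵥ p.2 = b + a₁ ⬝ᵥ a₂ := by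
    rintro ⟨u, v⟩
    change Fin.append a₁ a₂ ⬝ᵥ Fin.append (u + a₂) (v + a₁) + b =
      ∑ i, Fin.append (u + a₂) (v + a₁) (Fin.castAdd k i) *
        Fin.append (u + a₂) (v + a₁) (Fin.natAdd k i) ↔ u ⬝ᵥ v = b + a₁ ⬝ᵥ a₂
    simp only [Fin.append_dotProduct_append, Fin.append_left, Fin.append_right]
    change _ = (u + a₂) ⬝ᵥ (v + a₁) ↔ _
    simp only [dotProduct_add, add_dotProduct, dotProduct_comm u a₁, dotProduct_comm a₂ a₁]
    constructor <;> intro h <;> linear_combination -h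
  rw [← Nat.card_congr (e.subtypeEquiv fun p => (key p).symm), Nat.card_eq_fintype_card,
    Fintype.card_subtype]

theorem two_pow_add_self_sub_eq (k : ℕ) :
    2 ^ (k + k) - (2 ^ k + (2 ^ k - 1) * 2 ^ (k - 1)) = 2 ^ (k + k - 1) - 2 ^ (k - 1) := by
  rcases k with _ | m
  · rfl
  · have h1 : 2 ^ (m + 1) = 2 * 2 ^ m := pow_succ' 2 m
    have h2 : 2 ^ (m + 1 + (m + 1)) = 4 * (2 ^ m * 2 ^ m) := by ring
    have h3 : 2 ^ (m + 1 + (m + 1) - 1) = 2 * (2 ^ m * 2 ^ m) := by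
      rw [show m + 1 + (m + 1) - 1 = m + m + 1 by omega]; ring
    have h4 : (2 * 2 ^ m - 1) * 2 ^ m = 2 * (2 ^ m * 2 ^ m) - 2 ^ m := by
      rw [Nat.sub_mul, one_mul, mul_assoc]
    have hN : 1 ≤ 2 ^ m := Nat.one_le_two_pow
    rw [h1, h2, h3, Nat.add_sub_cancel, h4]
    omega

/-- The inner product function on 2k variables is bent: its nonlinearity is
exactly 2^(2k-1) - 2^(k-1). -/
theorem inner_product_is_bent (k : ℕ) :
    NL (k + k) (fun x => ∑ i : Fin k, x (Fin.castAdd k i) * x (Fin.natAdd k i)) =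
      2 ^ (k + k - 1) - 2 ^ (k - 1) := by
  have hsup : univ.sup (fun ab : (Fin (k + k) → ZMod 2) × ZMod 2 =>
        Nat.card {x : Fin (k + k) → ZMod 2 |
          (∑ i, ab.1 i * x i) + ab.2 = ∑ i : Fin k, x (Fin.castAdd k i) * x (Fin.natAdd k i)}) =
      #{p : (Fin k → ZMod 2) × (Fin k → ZMod 2) | p.1 ⬝ᵥ p.2 = 0} := by
    apply le_antisymm
    · refine Finset.sup_le fun ⟨a, b⟩ _ => ?_
      obtain ⟨⟨a₁, a₂⟩, rfl⟩ := (Fin.appendEquiv k k).surjective a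
      exact (card_affine_agree_innerProduct a₁ a₂ b).trans_le (card_pairs_dotProduct_le _)
    · have h := card_affine_agree_innerProduct (0 : Fin k → ZMod 2) 0 0
      rw [zero_dotProduct, add_zero] at h
      exact le_sup_of_le (mem_univ (Fin.append 0 0, 0)) h.symm.le
  rw [NL, hsup, card_pairs_dotProduct_eq, if_pos rfl, ZMod.card, Fintype.card_fin]
  exact two_pow_add_self_sub_eq k
end

section
/- A uniformly random k×k matrix over 𝔽₂ has rank at most d with probability at most 2^{k − (k−d)²}. -/
/-!
A matrix of rank at most `d` is determined by a set of `d` of its columns spanning its column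
space, the entries of those columns, and the coefficients expressing each remaining column in
terms of them. For `k × k` matrices over `𝔽₂` this leaves at most
`C(k, d) · 2^(k d + (k - d) d) ≤ 2^(k + k² - (k - d)²)` possibilities.
-/

open Finset Submodule

namespace Matrix

variable {K m n : Type*} [Field K]

theorem exists_finset_card_le_rank_col_mem_span [Fintype n] (M : Matrix m n K) :
    ∃ S : Finset n, #S ≤ M.rank ∧ ∀ j, M.col j ∈ span K (M.col '' S) := by
  classical
  obtain ⟨b, -, -, hspan, hli⟩ :=
    exists_linearIndepOn_extension (linearIndepOn_empty K M.col) (Set.empty_subset Set.univ)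
  refine ⟨b.toFinset, ?_, fun j => by simpa using hspan ⟨j, trivial, rfl⟩⟩
  have := Module.Finite.span_of_finite K (Set.finite_range M.col)
  calc #b.toFinset = Module.finrank K (span K (Set.range fun i : b => M.col i)) := by
        rw [finrank_span_eq_card hli, Set.toFinset_card]
    _ ≤ Module.finrank K (span K (Set.range M.col)) :=
        Submodule.finrank_mono (span_mono (Set.range_comp_subset_range _ _))
    _ = M.rank := M.rank_eq_finrank_span_cols.symm

theorem exists_finset_card_eq_col_mem_span [Fintype n] {d : ℕ} (M : Matrix m n K)
    (hM : M.rank ≤ d) (hd : d ≤ Fintype.card n) :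
    ∃ S : Finset n, #S = d ∧ ∀ j, M.col j ∈ span K (M.col '' S) := by
  obtain ⟨S, hS, hspan⟩ := M.exists_finset_card_le_rank_col_mem_span
  obtain ⟨T, hST, hT⟩ := exists_superset_card_eq (hS.trans hM) hd
  exact ⟨T, hT, fun j => span_mono (Set.image_mono hST) (hspan j)⟩

def ofSpanningCols [DecidableEq n] (S : Finset n) (A : S → m → K)
    (C : {j // j ∉ S} → S → K) : Matrix m n K :=
  of fun x j => if h : j ∈ S then A ⟨j, h⟩ x else ∑ i, C ⟨j, h⟩ i * A i x

theorem exists_ofSpanningCols_eq [DecidableEq n] {M : Matrix m n K} {S : Finset n}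
    (hS : ∀ j, M.col j ∈ span K (M.col '' S)) : ∃ A C, ofSpanningCols S A C = M := by
  choose C hC using fun j : {j // j ∉ S} => (mem_span_image_finset_iff_exists_fun K).mp (hS j)
  refine ⟨fun i => M.col i, C, ?_⟩
  ext x j
  by_cases h : j ∈ S
  · simp [ofSpanningCols, h]
  · simpa [ofSpanningCols, h] using congrFun (hC ⟨j, h⟩) x

theorem card_rank_le_le_choose_mul_pow [Fintype m] [Fintype n] [Fintype K] {d : ℕ}
    (hd : d ≤ Fintype.card n) :
    Nat.card {M : Matrix m n K // M.rank ≤ d} ≤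
      (Fintype.card n).choose d *
        Fintype.card K ^ (Fintype.card m * d + (Fintype.card n - d) * d) := by
  classical
  have hcover : univ.filter (fun M : Matrix m n K => M.rank ≤ d) ⊆
      (powersetCard d univ).biUnion fun S => univ.image (Function.uncurry (ofSpanningCols S)) := by
    intro M hM
    obtain ⟨S, hS, hspan⟩ := M.exists_finset_card_eq_col_mem_span (mem_filter.mp hM).2 hd
    obtain ⟨A, C, rfl⟩ := exists_ofSpanningCols_eq hspan
    simp only [mem_biUnion, mem_powersetCard, mem_image]
    exact ⟨S, ⟨subset_univ S, hS⟩, (A, C), mem_univ _, rfl⟩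
  rw [Nat.card_eq_fintype_card, Fintype.card_subtype]
  calc _ ≤ _ := card_le_card hcover
    _ ≤ _ := card_biUnion_le
    _ ≤ ∑ _S ∈ powersetCard d (univ : Finset n),
          Fintype.card K ^ (Fintype.card m * d + (Fintype.card n - d) * d) := by
        refine sum_le_sum fun S hS => card_image_le.trans_eq ?_
        simp [Fintype.card_subtype_compl, (mem_powersetCard.mp hS).2, pow_add, pow_mul]
        ring
    _ = _ := by simp

end Matrix

/-- The number of k x k matrices over GF(2) of rank at most d is at most
2^(k^2) * 2^(k-(k-d)^2): a uniformly random such matrix has rank at most d with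
probability at most 2^(k-(k-d)^2). -/
theorem low_rank_matrix_count (k d : ℕ) (hd : d ≤ k) :
    (Nat.card {M : Matrix (Fin k) (Fin k) (ZMod 2) // M.rank ≤ d} : ℝ) ≤
      2 ^ (k ^ 2) * (2 : ℝ) ^ ((k : ℝ) - ((k : ℝ) - (d : ℝ)) ^ 2) := by
  have hcount := Matrix.card_rank_le_le_choose_mul_pow (K := ZMod 2) (m := Fin k) (n := Fin k)
    (by simpa using hd)
  simp only [Fintype.card_fin, ZMod.card] at hcount
  have hexp : ((k ^ 2 : ℕ) : ℝ) + ((k : ℝ) - ((k : ℝ) - d) ^ 2) =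
      ((k + (k * d + (k - d) * d) : ℕ) : ℝ) := by
    push_cast [Nat.cast_sub hd]; ring
  calc (Nat.card {M : Matrix (Fin k) (Fin k) (ZMod 2) // M.rank ≤ d} : ℝ)
      ≤ (k.choose d * 2 ^ (k * d + (k - d) * d) : ℕ) := by exact_mod_cast hcount
    _ ≤ (2 ^ k * 2 ^ (k * d + (k - d) * d) : ℕ) := by gcongr; exact Nat.choose_le_two_pow k d
    _ = (2 : ℝ) ^ (((k ^ 2 : ℕ) : ℝ) + ((k : ℝ) - ((k : ℝ) - d) ^ 2)) := by
        rw [hexp, Real.rpow_natCast]; push_cast; ring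
    _ = _ := by rw [Real.rpow_add two_pos, Real.rpow_natCast]
end

section
/- For every n > 1, the family of all 2^n indicator functions {I_z : z ∈ 𝔽₂^n}, viewed as one (n, 2^n)-function, has multiplicative complexity exactly 2^n − n − 1 with respect to XOR-AND circuits. -/
/-!
Every wire of an XOR-AND circuit is a sum of wires computed earlier, the constant 1, an input
variable, or an AND gate, so all wires lie in the span of `1, x₁, …, xₙ` and the AND-gate outputs.
The `2 ^ n` indicator functions form the standard basis of the functions `𝔽₂ⁿ → 𝔽₂`, which forces
at least `2 ^ n - n - 1` AND gates. Conversely, one AND gate per monomial `∏_{i ∈ S} xᵢ` with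
`|S| ≥ 2` produces all monomials, and `I_z(x) = ∏ᵢ (xᵢ + zᵢ + 1)` expands into a linear
combination of monomials, which XOR gates compute for free.
-/

namespace XorAndCircuit

open Finset Submodule

abbrev BoolFun (n : ℕ) := (Fin n → ZMod 2) → ZMod 2

def wire (n : ℕ) (P : List Instr) (j : ℕ) : BoolFun n := fun x => (evalProg n x P).getD j 0

def gateFun (n : ℕ) (P : List Instr) (g : Instr) : BoolFun n :=
  fun x => stepEval n x (evalProg n x P) g

def wireFuns (n : ℕ) (P : List Instr) : Set (BoolFun n) := wire n P '' Set.Iio P.length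

def monomial {n : ℕ} (S : Finset (Fin n)) : BoolFun n := fun x => ∏ i ∈ S, x i

variable {n : ℕ}

section Evaluation

lemma evalProg_concat (x : Fin n → ZMod 2) (P : List Instr) (g : Instr) :
    evalProg n x (P ++ [g]) = evalProg n x P ++ [stepEval n x (evalProg n x P) g] := by
  simp [evalProg, List.foldl_append]

lemma length_evalProg (x : Fin n → ZMod 2) (P : List Instr) :
    (evalProg n x P).length = P.length := by
  induction P using List.reverseRecOn with
  | nil => rfl
  | append_singleton P g ih => simp [evalProg_concat, ih]

lemma computes1_iff_wire_eq {P : List Instr} {j : ℕ} {f : BoolFun n} :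
    Computes1 n P j f ↔ wire n P j = f :=
  funext_iff.symm

lemma wire_append_of_lt (P Q : List Instr) {j : ℕ} (hj : j < P.length) :
    wire n (P ++ Q) j = wire n P j := by
  induction Q using List.reverseRecOn with
  | nil => simp
  | append_singleton Q g ih =>
    funext x
    rw [← List.append_assoc, wire, evalProg_concat,
      List.getD_append _ _ _ _ (by simp [length_evalProg]; omega)]
    exact congrFun ih x

lemma wire_of_length_le {P : List Instr} {j : ℕ} (hj : P.length ≤ j) : wire n P j = 0 := by
  funext x
  exact List.getD_eq_default _ _ (by rwa [length_evalProg])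

lemma wire_concat_length (P : List Instr) (g : Instr) :
    wire n (P ++ [g]) P.length = gateFun n P g := by
  funext x
  simp [wire, gateFun, evalProg_concat, length_evalProg]

lemma gateFun_var (P : List Instr) (i : Fin n) : gateFun n P (.var i) = fun x => x i := by
  funext x
  simp [gateFun, stepEval]

lemma gateFun_xor (P : List Instr) (a b : ℕ) :
    gateFun n P (.xor a b) = wire n P a + wire n P b :=
  rfl

lemma gateFun_and (P : List Instr) (a b : ℕ) :
    gateFun n P (.and a b) = wire n P a * wire n P b :=
  rfl

lemma wireFuns_mono (P Q : List Instr) : wireFuns n P ⊆ wireFuns n (P ++ Q) := by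
  rintro _ ⟨j, hj, rfl⟩
  exact ⟨j, by simp only [Set.mem_Iio, List.length_append] at hj ⊢; omega,
    wire_append_of_lt P Q hj⟩

lemma gateFun_mem_wireFuns (P : List Instr) (g : Instr) :
    gateFun n P g ∈ wireFuns n (P ++ [g]) :=
  ⟨P.length, by simp, wire_concat_length P g⟩

lemma andCount_append (P Q : List Instr) : andCount (P ++ Q) = andCount P + andCount Q := by
  simp [andCount]

end Evaluation

section LowerBound

def affineGens (n : ℕ) : Finset (BoolFun n) := insert 1 (univ.image fun i x => x i)

lemma card_affineGens_le : (affineGens n).card ≤ n + 1 := by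
  refine (card_insert_le _ _).trans (Nat.succ_le_succ ?_)
  exact card_image_le.trans (by simp)

lemma gateFun_mem_span_of_isAnd_eq_false {P : List Instr} {S : Set (BoolFun n)}
    (hS : ↑(affineGens n) ⊆ S) (hP : ∀ j, wire n P j ∈ span (ZMod 2) S) {g : Instr}
    (hg : g.isAnd = false) : gateFun n P g ∈ span (ZMod 2) S := by
  cases g with
  | var i =>
    by_cases hi : i < n
    · rw [show i = (⟨i, hi⟩ : Fin n) from rfl, gateFun_var]
      exact subset_span (hS (by simp [affineGens]))
    · convert zero_mem (span (ZMod 2) S)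
      funext x
      simp [gateFun, stepEval, hi]
  | one => exact subset_span (hS (mem_insert_self _ _))
  | xor a b => exact add_mem (hP a) (hP b)
  | and a b => cases hg

theorem exists_wire_mem_span (P : List Instr) :
    ∃ A : Finset (BoolFun n), A.card ≤ andCount P ∧
      ∀ j, wire n P j ∈ span (ZMod 2) ↑(affineGens n ∪ A) := by
  classical
  induction P using List.reverseRecOn with
  | nil => exact ⟨∅, le_rfl, fun j => wire_of_length_le (P := []) (Nat.zero_le j) ▸ zero_mem _⟩
  | append_singleton P g ih =>
    obtain ⟨A, hcard, hA⟩ := ih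
    obtain ⟨A', hA'card, hAA', hgate⟩ : ∃ A' : Finset (BoolFun n),
        A'.card ≤ andCount (P ++ [g]) ∧ A ⊆ A' ∧
          gateFun n P g ∈ span (ZMod 2) ↑(affineGens n ∪ A') := by
      cases hg : g.isAnd
      · have : andCount [g] = 0 := by simp [andCount, hg]
        refine ⟨A, by rwa [andCount_append, this, add_zero], subset_rfl, ?_⟩
        exact gateFun_mem_span_of_isAnd_eq_false (by simp) hA hg
      · refine ⟨insert (gateFun n P g) A, ?_, subset_insert _ _, subset_span (by simp)⟩
        have : andCount [g] = 1 := by simp [andCount, hg]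
        rw [andCount_append, this]
        exact (card_insert_le _ _).trans (by omega)
    refine ⟨A', hA'card, fun j => ?_⟩
    rcases lt_trichotomy j P.length with hj | rfl | hj
    · rw [wire_append_of_lt _ _ hj]
      exact span_mono (by gcongr) (hA j)
    · rwa [wire_concat_length]
    · rw [wire_of_length_le (by simp; omega)]
      exact zero_mem _

theorem card_le_add_andCount_of_linearIndependent {ι : Type*} [Fintype ι] {f : ι → BoolFun n}
    (hf : LinearIndependent (ZMod 2) f) {P : List Instr} {out : ι → ℕ}
    (hout : ∀ i, Computes1 n P (out i) (f i)) : Fintype.card ι ≤ n + 1 + andCount P := by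
  classical
  obtain ⟨A, hA, hspan⟩ := exists_wire_mem_span (n := n) P
  have hrange :
      Set.range f ⊆ (span (ZMod 2) (↑(affineGens n ∪ A) : Set (BoolFun n)) : Set (BoolFun n)) := by
    rintro _ ⟨i, rfl⟩
    rw [← computes1_iff_wire_eq.1 (hout i)]
    exact hspan _
  calc Fintype.card ι ≤ (affineGens n ∪ A).card := by
        simpa using linearIndependent_le_span_aux' f hf _ hrange
    _ ≤ (affineGens n).card + A.card := card_union_le _ _
    _ ≤ n + 1 + andCount P := add_le_add card_affineGens_le hA

theorem two_pow_le_add_andCount_of_computes_single {P : List Instr} {out : (Fin n → ZMod 2) → ℕ}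
    (h : ∀ z, Computes1 n P (out z) (Pi.single z 1)) : 2 ^ n ≤ n + 1 + andCount P := by
  have := card_le_add_andCount_of_linearIndependent
    (Pi.basisFun (ZMod 2) (Fin n → ZMod 2)).linearIndependent (by simpa using h)
  simpa [Fintype.card_fun] using this

end LowerBound

section UpperBound

lemma exists_append_mul {ι : Type*} (s : Finset ι) {f : ι → BoolFun n} {g : BoolFun n}
    {P : List Instr} (hf : ∀ i ∈ s, f i ∈ wireFuns n P) (hg : g ∈ wireFuns n P) :
    ∃ Q, andCount Q ≤ s.card ∧ ∀ i ∈ s, f i * g ∈ wireFuns n (P ++ Q) := by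
  classical
  induction s using Finset.induction_on with
  | empty => exact ⟨[], by simp [andCount], by simp⟩
  | insert i s hi ih =>
    obtain ⟨Q, hQ, hfg⟩ := ih fun k hk => hf k (mem_insert_of_mem hk)
    obtain ⟨a, ha, hfa⟩ := hf i (mem_insert_self i s)
    obtain ⟨b, hb, rfl⟩ := hg
    refine ⟨Q ++ [.and a b], ?_, fun k hk => ?_⟩
    · rw [andCount_append, card_insert_of_notMem hi, show andCount [Instr.and a b] = 1 from rfl]
      omega
    rw [← List.append_assoc]
    rcases mem_insert.1 hk with rfl | hk
    · have := gateFun_mem_wireFuns (n := n) (P ++ Q) (.and a b)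
      rwa [gateFun_and, wire_append_of_lt _ _ ha, wire_append_of_lt _ _ hb, hfa] at this
    · exact wireFuns_mono _ _ (hfg k hk)

lemma exists_append_sum_smul {ι : Type*} (s : Finset ι) (c : ι → ZMod 2) {f : ι → BoolFun n}
    {P : List Instr} (hf : ∀ i ∈ s, f i ∈ wireFuns n P) :
    ∃ Q, andCount Q = 0 ∧ ∑ i ∈ s, c i • f i ∈ wireFuns n (P ++ Q) := by
  classical
  induction s using Finset.induction_on with
  | empty =>
    -- the XOR of any wire with itself is the zero function
    refine ⟨[.xor 0 0], rfl, ?_⟩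
    simpa [gateFun_xor, CharTwo.add_self_eq_zero] using gateFun_mem_wireFuns (n := n) P (.xor 0 0)
  | insert i s hi ih =>
    obtain ⟨Q, hQ, hsum⟩ := ih fun k hk => hf k (mem_insert_of_mem hk)
    obtain ⟨a, ha, hfa⟩ := hf i (mem_insert_self i s)
    rw [sum_insert hi]
    rcases (by decide : ∀ t : ZMod 2, t = 0 ∨ t = 1) (c i) with hc | hc
    · exact ⟨Q, hQ, by simpa [hc] using hsum⟩
    obtain ⟨b, hb, hwb⟩ := hsum
    refine ⟨Q ++ [.xor a b], by rw [andCount_append, hQ]; rfl, ?_⟩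
    have := gateFun_mem_wireFuns (n := n) (P ++ Q) (.xor a b)
    rw [gateFun_xor, wire_append_of_lt _ _ ha, hfa, hwb] at this
    rwa [hc, one_smul, ← List.append_assoc]

lemma exists_append_of_forall_mem_span {κ : Type*} (s : Finset κ) {f : κ → BoolFun n}
    {P : List Instr} (hf : ∀ k ∈ s, f k ∈ span (ZMod 2) (wireFuns n P)) :
    ∃ Q, andCount Q = 0 ∧ ∀ k ∈ s, f k ∈ wireFuns n (P ++ Q) := by
  classical
  induction s using Finset.induction_on with
  | empty => exact ⟨[], rfl, by simp⟩
  | insert k s _ ih =>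
    obtain ⟨Q, hQ, hfQ⟩ := ih fun l hl => hf l (mem_insert_of_mem hl)
    obtain ⟨m, c, g, hcg⟩ := mem_span_set'.1 (hf k (mem_insert_self k s))
    obtain ⟨R, hR, hfR⟩ := exists_append_sum_smul (P := P ++ Q) univ c (f := fun i => (g i : _))
      fun i _ => wireFuns_mono (n := n) P Q (g i).2
    refine ⟨Q ++ R, by simp [andCount_append, hQ, hR], fun l hl => ?_⟩
    rw [← List.append_assoc]
    rcases mem_insert.1 hl with rfl | hl
    · exact hcg ▸ hfR
    · exact wireFuns_mono _ _ (hfQ l hl)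

lemma monomial_empty_eq_gateFun_one (P : List Instr) :
    monomial (∅ : Finset (Fin n)) = gateFun n P .one := by
  funext x
  simp [monomial, gateFun, stepEval]

theorem exists_monomials (T : Finset (Fin n)) :
    ∃ P, andCount P + T.card + 1 ≤ 2 ^ T.card ∧ ∀ S ⊆ T, monomial S ∈ wireFuns n P := by
  classical
  induction T using Finset.induction_on with
  | empty =>
    refine ⟨[.one], by simp [andCount, Instr.isAnd], fun S hS => ?_⟩
    rw [subset_empty.1 hS, monomial_empty_eq_gateFun_one []]
    exact gateFun_mem_wireFuns [] .one
  | insert a T ha ih =>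
    obtain ⟨P, hP, hmon⟩ := ih
    have hxa : (fun x => x a) ∈ wireFuns n (P ++ [.var a]) :=
      gateFun_var P a ▸ gateFun_mem_wireFuns P (.var a)
    obtain ⟨Q, hQ, hprod⟩ := exists_append_mul (T.powerset.erase ∅) (f := monomial)
      (fun S hS => wireFuns_mono _ _ (hmon S (mem_powerset.1 (mem_of_mem_erase hS)))) hxa
    refine ⟨P ++ [.var a] ++ Q, ?_, fun S hS => ?_⟩
    · rw [card_erase_of_mem (empty_mem_powerset T), card_powerset] at hQ
      have : andCount [Instr.var a] = 0 := rfl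
      rw [andCount_append, andCount_append, this, card_insert_of_notMem ha, pow_succ]
      omega
    by_cases haS : a ∈ S
    · by_cases hSa : S.erase a = ∅
      · rw [← insert_erase haS, hSa]
        convert wireFuns_mono _ Q hxa
        simp [monomial]
      · have : monomial S = monomial (S.erase a) * fun x => x a := by
          funext x
          exact (prod_erase_mul S _ haS).symm
        rw [this]
        refine hprod _ (mem_erase.2 ⟨hSa, mem_powerset.2 ?_⟩)
        exact (erase_subset_erase a hS).trans (erase_insert ha).subset
    · rw [List.append_assoc]
      exact wireFuns_mono _ _ (hmon S ((subset_insert_iff_of_notMem haS).1 hS))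

lemma single_one_eq_sum_smul_monomial (z : Fin n → ZMod 2) :
    Pi.single z 1 = ∑ S ∈ univ.powerset, (∏ i ∈ univ \ S, (1 + z i)) • monomial S := by
  funext x
  have hcoord : ∀ a b : ZMod 2, (if a = b then 1 else 0) = a + (1 + b) := by decide
  have hprod : (Pi.single z 1 : BoolFun n) x = ∏ i, (x i + (1 + z i)) := by
    simp [Pi.single_apply, ← hcoord, Fintype.prod_boole, funext_iff]
  rw [hprod, prod_add, Finset.sum_apply]
  exact sum_congr rfl fun S _ => mul_comm _ _

theorem exists_computes_single (n : ℕ) :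
    ∃ (P : List Instr) (out : (Fin n → ZMod 2) → ℕ),
      (∀ z, Computes1 n P (out z) (Pi.single z 1)) ∧ andCount P + n + 1 ≤ 2 ^ n := by
  obtain ⟨P, hP, hmon⟩ := exists_monomials (n := n) univ
  obtain ⟨Q, hQ, hsingle⟩ := exists_append_of_forall_mem_span univ (P := P)
    (f := fun z => Pi.single z 1) fun z _ => by
      rw [single_one_eq_sum_smul_monomial]
      exact sum_mem fun S _ => smul_mem _ _ (subset_span (hmon S (subset_univ S)))
  choose out _ hout using fun z => hsingle z (mem_univ z)
  refine ⟨P ++ Q, out, fun z => computes1_iff_wire_eq.2 (hout z), ?_⟩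
  simpa [andCount_append, hQ] using hP

end UpperBound

end XorAndCircuit

theorem indicators_mult_complexity_general (n : ℕ) :
    (∃ (P : List Instr) (out : (Fin n → ZMod 2) → ℕ),
        (∀ x z, (evalProg n x P).getD (out z) 0 = if x = z then 1 else 0) ∧
          andCount P = 2 ^ n - n - 1) ∧
      ∀ (P : List Instr) (out : (Fin n → ZMod 2) → ℕ),
        (∀ x z, (evalProg n x P).getD (out z) 0 = if x = z then 1 else 0) →
          2 ^ n - n - 1 ≤ andCount P := by
  have computes_iff (P : List Instr) (out : (Fin n → ZMod 2) → ℕ) :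
      (∀ x z, (evalProg n x P).getD (out z) 0 = if x = z then 1 else 0) ↔
        ∀ z, Computes1 n P (out z) (Pi.single z 1) := by
    simp only [Computes1, Pi.single_apply]
    exact forall_comm
  obtain ⟨P, out, hP, hcount⟩ := XorAndCircuit.exists_computes_single n
  refine ⟨⟨P, out, (computes_iff P out).2 hP, ?_⟩, fun Q out' hQ => ?_⟩
  · have := XorAndCircuit.two_pow_le_add_andCount_of_computes_single hP
    omega
  · have := XorAndCircuit.two_pow_le_add_andCount_of_computes_single ((computes_iff Q out').1 hQ)
    omega

/-- For n > 1, the (n, 2^n)-function of all indicator functions has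
multiplicative complexity exactly 2^n - n - 1. -/
theorem indicators_mult_complexity (n : ℕ) (hn : 1 < n) :
    (∃ (P : List Instr) (out : (Fin n → ZMod 2) → ℕ),
        (∀ x z, (evalProg n x P).getD (out z) 0 = if x = z then 1 else 0) ∧
          andCount P = 2 ^ n - n - 1) ∧
      ∀ (P : List Instr) (out : (Fin n → ZMod 2) → ℕ),
        (∀ x z, (evalProg n x P).getD (out z) 0 = if x = z then 1 else 0) →
          2 ^ n - n - 1 ≤ andCount P :=
  indicators_mult_complexity_general n
end
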